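/- arXiv:1706.03330 — 4 statements merged into one kernel-verified Lean document; each statement's English description precedes it below -/
import Mathlib

section
/- Let a_1, …, a_P be strictly positive reals (P ≥ 2) and let L be a real number with 0 < L < P. Then there exists a unique κ > 0 such that Σ_{p=1}^P min{1, a_p/κ} = L. -/
/-- The normalization constant of the normalized update rule is well
defined: for strictly positive `a : Fin P → ℝ` with `P ≥ 2` and a real `0 < L < P`,
there is a unique `κ > 0` with `∑ p, min 1 (a p / κ) = L`. -/
theorem stmt_3 (P : ℕ) (hP : 2 ≤ P)
    (a : Fin P → ℝ) (ha : ∀ p, 0 < a p)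
    (L : ℝ) (hL0 : 0 < L) (hLP : L < (P : ℝ)) :
    ∃! κ : ℝ, 0 < κ ∧ ∑ p, min 1 (a p / κ) = L := by
  have hPpos : 0 < P := by omega
  haveI : Nonempty (Fin P) := ⟨⟨0, hPpos⟩⟩
  set f : ℝ → ℝ := fun κ => ∑ p, min 1 (a p / κ) with hfdef
  -- uniqueness helper
  have key : ∀ x y : ℝ, 0 < x → x ≤ y → f x = L → f y = L → x = y := by
    intro x y hx hxy hfx hfy
    have hy : 0 < y := lt_of_lt_of_le hx hxy
    have hle : ∀ p ∈ Finset.univ, min 1 (a p / y) ≤ min 1 (a p / x) := by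
      intro p _
      have : a p / y ≤ a p / x := by gcongr; exact (ha p).le
      exact min_le_min le_rfl this
    have hsum : ∑ p, min 1 (a p / x) = ∑ p, min 1 (a p / y) :=
      hfx.trans hfy.symm
    have heq : ∀ p ∈ Finset.univ, min 1 (a p / x) = min 1 (a p / y) := by
      intro p hpu
      exact ((Finset.sum_eq_sum_iff_of_le hle).mp hsum.symm p hpu).symm
    have hex : ∃ p : Fin P, min 1 (a p / y) < 1 := by
      by_contra h
      push_neg at h
      have h1 : (P : ℝ) ≤ f y := by
        calc (P : ℝ) = ∑ _p : Fin P, (1 : ℝ) := by simp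
        _ ≤ f y := Finset.sum_le_sum (fun p _ => h p)
      rw [hfy] at h1
      linarith
    obtain ⟨p, hp⟩ := hex
    have hpy : a p / y < 1 := by
      rcases min_lt_iff.mp hp with h | h
      · exact absurd h (lt_irrefl 1)
      · exact h
    have h1 : min 1 (a p / y) = a p / y := min_eq_right hpy.le
    have h2 : min 1 (a p / x) = a p / y := (heq p (Finset.mem_univ p)).trans h1
    have hpx : a p / x < 1 := by
      by_contra h
      push_neg at h
      rw [min_eq_left h] at h2
      linarith
    have h3 : a p / x = a p / y := by rw [min_eq_right hpx.le] at h2; exact h2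
    have := (div_eq_div_iff hx.ne' hy.ne').mp h3
    exact mul_left_cancel₀ (ha p).ne' (by linarith)
  -- existence
  obtain ⟨p0, hp0⟩ := Finite.exists_min a
  set c := a p0 with hc
  have hcpos : 0 < c := ha p0
  set S := ∑ p, a p with hS
  have hSc : (P : ℝ) * c ≤ S := by
    calc (P : ℝ) * c = ∑ _p : Fin P, c := by simp [mul_comm]
    _ ≤ S := Finset.sum_le_sum (fun p _ => hp0 p)
  set K := S / L with hK
  have hSpos : 0 < S := lt_of_lt_of_le (by positivity) hSc
  have hKpos : 0 < K := div_pos hSpos hL0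
  have hcK : c < K := by
    rw [hK, lt_div_iff₀ hL0]
    calc c * L < c * P := by gcongr
    _ ≤ S := by rw [mul_comm]; exact hSc
  have hfc : f c = (P : ℝ) := by
    rw [hfdef]
    calc ∑ p, min 1 (a p / c) = ∑ _p : Fin P, (1 : ℝ) := by
          refine Finset.sum_congr rfl (fun p _ => ?_)
          exact min_eq_left ((le_div_iff₀ hcpos).mpr (by simpa using hp0 p))
    _ = (P : ℝ) := by simp
  have hfK : f K ≤ L := by
    have : f K ≤ ∑ p, a p / K :=
      Finset.sum_le_sum (fun p _ => min_le_right _ _)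
    calc f K ≤ ∑ p, a p / K := this
    _ = S / K := by rw [hS, Finset.sum_div]
    _ = L := by rw [hK]; field_simp
  have hcont : ContinuousOn f (Set.Icc c K) := by
    rw [hfdef]
    refine continuousOn_finset_sum _ fun p _ => ?_
    have hdiv : ContinuousOn (fun κ : ℝ => a p / κ) (Set.Icc c K) :=
      ContinuousOn.div continuousOn_const continuousOn_id
        (fun x hx => ne_of_gt (lt_of_lt_of_le hcpos hx.1))
    exact ContinuousOn.inf continuousOn_const hdiv
  have hmem : L ∈ Set.Icc (f K) (f c) := ⟨hfK, by rw [hfc]; exact hLP.le⟩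
  obtain ⟨κ, hκmem, hκ⟩ := intermediate_value_Icc' hcK.le hcont hmem
  refine ⟨κ, ⟨lt_of_lt_of_le hcpos hκmem.1, hκ⟩, ?_⟩
  intro y hy
  rcases le_total y κ with h | h
  · exact key y κ hy.1 h hy.2 hκ
  · exact (key κ y (lt_of_lt_of_le hcpos hκmem.1) h hκ hy.2).symm
end

section
/- Consider the normalized update rule, and suppose there exist a permutation π of {1,…,P} such that r_{π(1)}^{(i)} > r_{π(2)}^{(i)} > ⋯ > r_{π(P)}^{(i)} > 0 for all iterations i. Suppose at iteration i−1 the algorithm has not reached a fixed point; let S = {p : x_p^{(i-1)} = 1} (so |S| < L) and let p* be the index with x_{p*}^{(i-1)} < 1 and r_{p*}^{(i-1)} > r_p^{(i-1)} for all p ∉ S with p ≠ p*. Then for every p ∈ S with r_p^{(i-1)} > r_{p*}^{(i-1)}, one has x_p^{(j)} = 1 for all j ≥ i. -/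
/-- First claim of the key lemma (Lemma 3 of the Appendix) for the
normalized update rule `x i p = min 1 (x (i-1) p * r i p / κ i)` with
`∑ p, x i p = L`: under a fixed strict ordering of the positive coefficients
`r i` (via a permutation `π`, the same for all iterations), if at iteration `i-1`
the algorithm has not reached a fixed point (the saturated set `S` has fewer than
`L` elements) and `p*` is the unsaturated index dominating all other unsaturated
indices, then every saturated coordinate `p ∈ S` with `r (i-1) p > r (i-1) p*`
stays equal to `1` at all iterations `j ≥ i`. -/
theorem stmt_5 (P L : ℕ) (hP : 2 ≤ P) (hL1 : 1 ≤ L) (hLP : L < P)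
    (x : ℕ → Fin P → ℝ) (r : ℕ → Fin P → ℝ) (κ : ℕ → ℝ)
    -- initialization
    (hx0 : ∀ p, 0 < x 0 p ∧ x 0 p ≤ 1) (hsum0 : ∑ p, x 0 p = (L : ℝ))
    -- the normalized update rule
    (hκpos : ∀ i, 1 ≤ i → 0 < κ i)
    (hupd : ∀ i, 1 ≤ i → ∀ p, x i p = min 1 (x (i - 1) p * r i p / κ i))
    (hsum : ∀ i, 1 ≤ i → ∑ p, x i p = (L : ℝ))
    -- fixed strict ordering of the positive coefficients, for all iterations
    (π : Equiv.Perm (Fin P))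
    (hrpos : ∀ i p, 0 < r i p)
    (hord : ∀ i, ∀ p q : Fin P, p < q → r i (π q) < r i (π p))
    -- iteration i-1 has not reached a fixed point
    (i : ℕ) (hi : 1 ≤ i)
    (S : Finset (Fin P)) (hS : S = Finset.univ.filter fun p => x (i - 1) p = 1)
    (hScard : S.card < L)
    (pstar : Fin P) (hpstar1 : x (i - 1) pstar < 1)
    (hpstar2 : ∀ p, p ∉ S → p ≠ pstar → r (i - 1) p < r (i - 1) pstar) :
    ∀ p ∈ S, r (i - 1) pstar < r (i - 1) p → ∀ j, i ≤ j → x j p = 1 := by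
  intro p hpS hrp j hj
  -- positivity and boundedness of the iterates
  have hxpos : ∀ j q, 0 < x j q := by
    intro j
    induction j with
    | zero => intro q; exact (hx0 q).1
    | succ n ih =>
      intro q
      rw [hupd (n+1) (by omega) q]
      simp only [Nat.add_sub_cancel]
      exact lt_min one_pos (div_pos (mul_pos (ih q) (hrpos _ _)) (hκpos _ (by omega)))
  have hxle : ∀ j q, x j q ≤ 1 := by
    intro j q
    cases j with
    | zero => exact (hx0 q).2
    | succ n => rw [hupd (n+1) (by omega) q]; exact min_le_left _ _
  have sumL : ∀ j, ∑ q, x j q = (L : ℝ) := by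
    intro j
    cases j with
    | zero => exact hsum0
    | succ n => exact hsum (n+1) (by omega)
  -- the ordering of coefficients is the same at all iterations
  have ord : ∀ (k k' : ℕ) (a b : Fin P), r k a < r k b → r k' a < r k' b := by
    intro k k' a b hab
    rcases lt_trichotomy (π.symm a) (π.symm b) with h | h | h
    · have h2 := hord k (π.symm a) (π.symm b) h
      simp only [Equiv.apply_symm_apply] at h2
      exact absurd hab (not_lt.mpr h2.le)
    · have : a = b := by
        have := congrArg π h; simpa using this
      simp [this] at hab
    · have h2 := hord k' (π.symm b) (π.symm a) h
      simpa only [Equiv.apply_symm_apply] using h2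
  -- key invariant: every coordinate whose coefficient dominates that of p stays saturated
  have key : ∀ j, i - 1 ≤ j → ∀ w, r (i-1) p ≤ r (i-1) w → x j w = 1 := by
    intro j hj'
    induction j, hj' using Nat.le_induction with
    | base =>
      intro w hw
      have hwS : w ∈ S := by
        by_contra hwS
        by_cases hwp : w = pstar
        · subst hwp
          exact absurd hw (not_le.mpr hrp)
        · have := hpstar2 w hwS hwp
          linarith
      rw [hS] at hwS
      exact (Finset.mem_filter.mp hwS).2
    | succ n hn ih =>
      intro w hw
      by_contra hne
      have hlt : x (n+1) w < 1 := lt_of_le_of_ne (hxle _ _) hne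
      have hxnw : x n w = 1 := ih w hw
      have hκp : 0 < κ (n+1) := hκpos _ (by omega)
      have hrwκ : r (n+1) w < κ (n+1) := by
        have hu := hupd (n+1) (by omega) w
        simp only [Nat.add_sub_cancel] at hu
        rw [hu, hxnw, one_mul] at hlt
        rcases lt_or_ge (r (n+1) w / κ (n+1)) 1 with h | h
        · exact (div_lt_one hκp).mp h
        · rw [min_eq_left h] at hlt
          exact absurd hlt (lt_irrefl 1)
      have hsum_lt : ∑ q, x (n+1) q < ∑ q, x n q := by
        apply Finset.sum_lt_sum
        · intro q _
          rcases le_or_gt (r (n+1) q) (r (n+1) w) with hq | hq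
          · have hu := hupd (n+1) (by omega) q
            simp only [Nat.add_sub_cancel] at hu
            rw [hu]
            calc min 1 (x n q * r (n+1) q / κ (n+1)) ≤ x n q * r (n+1) q / κ (n+1) :=
                  min_le_right _ _
              _ ≤ x n q := by
                  rw [mul_div_assoc]
                  exact mul_le_of_le_one_right (hxpos n q).le
                    (le_of_lt ((div_lt_one hκp).mpr (lt_of_le_of_lt hq hrwκ)))
          · have hq' : r (i-1) p ≤ r (i-1) q :=
              le_trans hw (le_of_lt (ord (n+1) (i-1) w q hq))
            rw [ih q hq']
            exact hxle _ _
        · exact ⟨w, Finset.mem_univ w, by rw [hxnw]; exact hlt⟩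
      rw [sumL (n+1), sumL n] at hsum_lt
      exact lt_irrefl _ hsum_lt
  exact key j (by omega) p le_rfl
end

section
/- Let P ≥ 2 and let L be an integer with 1 ≤ L < P. Let x ∈ (0,1]^P satisfy Σ_{p=1}^P x_p = L, let S = {p : x_p = 1} with |S| < L, let r_1,…,r_P > 0, and let p* ∉ S be such that r_{p*} > r_p for all p ∉ S with p ≠ p*. If κ > 0 satisfies Σ_{p=1}^P min{1, x_p r_p/κ} = L, then κ < r_{p*}; consequently the updated coordinate satisfies min{1, x_{p*} r_{p*}/κ} > x_{p*}, i.e., the best unsaturated coordinate strictly increases in one step of the normalized update rule. -/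
/-- One step of the normalized update rule: the key inequality chain
(13) of the Appendix.  For `x ∈ (0,1]^P` with `∑ p, x p = L`, saturated set
`S = {p | x p = 1}` with `|S| < L`, positive coefficients `r`, and `p* ∉ S`
dominating all other unsaturated indices, any `κ > 0` with
`∑ p, min 1 (x p * r p / κ) = L` satisfies `κ < r p*`; consequently the best
unsaturated coordinate strictly increases in one step. -/
theorem stmt_6 (P L : ℕ) (hP : 2 ≤ P) (hL1 : 1 ≤ L) (hLP : L < P)
    (x r : Fin P → ℝ)
    (hx : ∀ p, 0 < x p ∧ x p ≤ 1) (hsum : ∑ p, x p = (L : ℝ))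
    (hr : ∀ p, 0 < r p)
    (S : Finset (Fin P)) (hS : S = Finset.univ.filter fun p => x p = 1)
    (hScard : S.card < L)
    (pstar : Fin P) (hpS : pstar ∉ S)
    (hdom : ∀ p, p ∉ S → p ≠ pstar → r p < r pstar)
    (κ : ℝ) (hκ : 0 < κ)
    (hκsum : ∑ p, min 1 (x p * r p / κ) = (L : ℝ)) :
    κ < r pstar ∧ x pstar < min 1 (x pstar * r pstar / κ) := by
  have hx1 : x pstar < 1 := by
    rcases (hx pstar) with ⟨h0, h1⟩
    rcases lt_or_eq_of_le h1 with h | h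
    · exact h
    · exfalso; apply hpS; rw [hS]; simp [h]
  -- find q ∉ S, q ≠ pstar
  have hcard : (insert pstar S).card < Fintype.card (Fin P) := by
    have := Finset.card_insert_le pstar S
    have h2 : S.card + 1 ≤ L := hScard
    simp only [Fintype.card_fin]
    omega
  have hne : (insert pstar S) ≠ Finset.univ := by
    intro h
    rw [h] at hcard
    simp [Finset.card_univ] at hcard
  obtain ⟨q, hq⟩ : ∃ q, q ∉ insert pstar S := by
    by_contra hall
    push_neg at hall
    exact hne (Finset.eq_univ_iff_forall.mpr hall)
  have hqS : q ∉ S := fun h => hq (Finset.mem_insert_of_mem h)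
  have hqp : q ≠ pstar := fun h => hq (h ▸ Finset.mem_insert_self _ _)
  have hrq : r q < r pstar := hdom q hqS hqp
  have hkey : κ < r pstar := by
    by_contra hge
    push_neg at hge
    have hlt : ∑ p, min 1 (x p * r p / κ) < ∑ p, x p := by
      apply Finset.sum_lt_sum
      · intro p _
        by_cases hpmem : p ∈ S
        · have : x p = 1 := by rw [hS] at hpmem; simpa using hpmem
          rw [this]; exact min_le_left _ _
        · have hr_le : r p ≤ r pstar := by
            by_cases hpp : p = pstar
            · rw [hpp]
            · exact (hdom p hpmem hpp).le
          have : x p * r p / κ ≤ x p := by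
            rw [div_le_iff₀ hκ]
            exact mul_le_mul_of_nonneg_left (hr_le.trans hge) (hx p).1.le
          exact (min_le_right _ _).trans this
      · refine ⟨q, Finset.mem_univ q, ?_⟩
        have : x q * r q / κ < x q := by
          rw [div_lt_iff₀ hκ]
          exact mul_lt_mul_of_pos_left (hrq.trans_le hge) (hx q).1
        exact (min_le_right _ _).trans_lt this
    rw [hκsum, hsum] at hlt
    exact lt_irrefl _ hlt
  refine ⟨hkey, lt_min hx1 ?_⟩
  have : 1 < r pstar / κ := (one_lt_div hκ).mpr hkey
  calc x pstar = x pstar * 1 := by ring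
    _ < x pstar * (r pstar / κ) := by
        exact mul_lt_mul_of_pos_left this (hx pstar).1
    _ = x pstar * r pstar / κ := by ring
end

section
/- Let P ≥ 2 and let L be an integer with 1 ≤ L < P. Let x ∈ (0,1]^P satisfy Σ_{p=1}^P x_p = L, let S = {p : x_p = 1}, let r_1,…,r_P > 0, and let q ∈ S be such that r_q > r_p for all p ∉ S. If κ > 0 satisfies Σ_{p=1}^P min{1, x_p r_p/κ} = L, then κ ≤ r_q. -/
/-- Sub-claim of the Appendix proof: for `x ∈ (0,1]^P` with
`∑ p, x p = L`, saturated set `S = {p | x p = 1}`, positive coefficients `r`, and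
`q ∈ S` with `r q > r p` for every unsaturated `p ∉ S`, any `κ > 0` satisfying the
normalization constraint `∑ p, min 1 (x p * r p / κ) = L` satisfies `κ ≤ r q`. -/
theorem stmt_7 (P L : ℕ) (hP : 2 ≤ P) (hL1 : 1 ≤ L) (hLP : L < P)
    (x r : Fin P → ℝ)
    (hx : ∀ p, 0 < x p ∧ x p ≤ 1) (hsum : ∑ p, x p = (L : ℝ))
    (hr : ∀ p, 0 < r p)
    (S : Finset (Fin P)) (hS : S = Finset.univ.filter fun p => x p = 1)
    (q : Fin P) (hqS : q ∈ S)
    (hdom : ∀ p, p ∉ S → r p < r q)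
    (κ : ℝ) (hκ : 0 < κ)
    (hκsum : ∑ p, min 1 (x p * r p / κ) = (L : ℝ)) :
    κ ≤ r q := by
  by_contra h
  push_neg at h
  have hxq : x q = 1 := by
    rw [hS] at hqS
    exact (Finset.mem_filter.mp hqS).2
  have hle : ∀ p ∈ Finset.univ, min 1 (x p * r p / κ) ≤ x p := by
    intro p _
    by_cases hp : p ∈ S
    · rw [hS] at hp
      have := (Finset.mem_filter.mp hp).2
      rw [this]
      exact min_le_left _ _
    · have hrp : r p < κ := (hdom p hp).trans h
      have : x p * r p / κ < x p := by
        rw [div_lt_iff₀ hκ]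
        exact mul_lt_mul_of_pos_left hrp (hx p).1
      exact (min_le_right _ _).trans this.le
  have hlt : min 1 (x q * r q / κ) < x q := by
    rw [hxq, one_mul]
    have : r q / κ < 1 := (div_lt_one hκ).mpr h
    exact lt_of_le_of_lt (min_le_right _ _) this
  have := Finset.sum_lt_sum hle ⟨q, Finset.mem_univ q, hlt⟩
  rw [hκsum, hsum] at this
  exact lt_irrefl _ this
end
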